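/- arXiv:1306.6295 — 2 statements merged into one kernel-verified Lean document; each statement's English description precedes it below -/
import Mathlib

section
/- Let P be a probability distribution on ℝ^m, and let X and X' be independent random vectors each distributed according to P. Then the χ²-divergence from the Gaussian location mixture N(0, I_m) * P to the standard Gaussian N(0, I_m) equals E[exp(⟨X, X'⟩)] − 1. -/
/-!
The translate `N(x, I)` of the standard Gaussian has density `φₓ(y) = exp(⟨x, y⟩ - |x|²/2)`
with respect to `N(0, I)` (coordinatewise Cameron–Martin), so the mixture `N(0, I) ∗ P` has
density `y ↦ ∫ φₓ(y) dP(x)`. By Tonelli, the integral of its square is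
`∬ (∫ φₓ φₓ' dN(0, I)) dP(x) dP(x')`, and `φₓ φₓ' = e^{⟨x, x'⟩} φ_{x+x'}` with `∫ φ_{x+x'} = 1`.
-/

open MeasureTheory ProbabilityTheory ENNReal

/-- The standard Gaussian measure `N(0, I_m)` on ℝ^m. -/
noncomputable def stdGaussian (m : ℕ) : Measure (Fin m → ℝ) :=
  Measure.pi fun _ => gaussianReal 0 1

/-- The χ²-divergence `χ²(P‖Q) = ∫ (dP/dQ)² dQ − 1`. -/
noncomputable def chiSqDiv {α : Type*} [MeasurableSpace α] (P Q : Measure α) : ℝ≥0∞ :=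
  (∫⁻ x, (P.rnDeriv Q x) ^ 2 ∂Q) - 1

namespace MeasureTheory

theorem lintegral_fin_nat_prod_eq_prod {n : ℕ} {α : Type*} [MeasurableSpace α]
    {μ : Fin n → Measure α} [∀ i, SigmaFinite (μ i)]
    {f : Fin n → α → ℝ≥0∞} (hf : ∀ i, Measurable (f i)) :
    ∫⁻ x, ∏ i, f i (x i) ∂Measure.pi μ = ∏ i, ∫⁻ x, f i x ∂μ i := by
  induction n with
  | zero => simp
  | succ n ih =>
    calc ∫⁻ x, ∏ i, f i (x i) ∂Measure.pi μ
        = ∫⁻ x : α × (Fin n → α), f 0 x.1 * ∏ i : Fin n, f i.succ (x.2 i)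
            ∂(μ 0).prod (Measure.pi fun i => μ i.succ) := by
          rw [← ((measurePreserving_piFinSuccAbove μ 0).symm).lintegral_comp_emb
            (MeasurableEquiv.measurableEmbedding _)]
          simp_rw [MeasurableEquiv.piFinSuccAbove_symm_apply, Fin.insertNthEquiv,
            Fin.prod_univ_succ, Fin.insertNth_zero, Equiv.coe_fn_mk, Fin.cons_succ,
            Fin.zero_succAbove, cast_eq, Fin.cons_zero]
      _ = ∏ i, ∫⁻ x, f i x ∂μ i := by
          have hg : Measurable fun y : Fin n → α => ∏ i, f i.succ (y i) :=
            Finset.measurable_prod _ fun i _ => (hf i.succ).comp (measurable_pi_apply i)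
          rw [lintegral_prod_mul (hf 0).aemeasurable hg.aemeasurable, ih fun i => hf i.succ,
            Fin.prod_univ_succ]

theorem lintegral_fintype_prod_eq_prod {ι α : Type*} [Fintype ι] [MeasurableSpace α]
    {μ : ι → Measure α} [∀ i, SigmaFinite (μ i)]
    {f : ι → α → ℝ≥0∞} (hf : ∀ i, Measurable (f i)) :
    ∫⁻ x, ∏ i, f i (x i) ∂Measure.pi μ = ∏ i, ∫⁻ x, f i x ∂μ i := by
  let e := (Fintype.equivFin ι).symm
  rw [← (measurePreserving_piCongrLeft (fun _ => μ _) e).lintegral_comp_emb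
    (MeasurableEquiv.measurableEmbedding _)]
  simp_rw [← e.prod_comp, MeasurableEquiv.coe_piCongrLeft, Equiv.piCongrLeft_apply_apply]
  exact lintegral_fin_nat_prod_eq_prod fun i => hf (e i)

theorem Measure.pi_withDensity {ι α : Type*} [Fintype ι] [MeasurableSpace α]
    {μ : ι → Measure α} [∀ i, SigmaFinite (μ i)] {f : ι → α → ℝ≥0∞}
    [∀ i, SigmaFinite ((μ i).withDensity (f i))] (hf : ∀ i, Measurable (f i)) :
    Measure.pi (fun i => (μ i).withDensity (f i))
      = (Measure.pi μ).withDensity fun x => ∏ i, f i (x i) := by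
  refine Measure.pi_eq fun s hs => ?_
  rw [withDensity_apply _ (.univ_pi hs), Measure.restrict_pi_pi,
    lintegral_fintype_prod_eq_prod hf]
  simp_rw [withDensity_apply _ (hs _)]

theorem Measure.conv_eq_withDensity_lintegral {G : Type*} [AddMonoid G]
    [MeasurableSpace G] [MeasurableAdd₂ G] {μ ν : Measure G} [SFinite μ] [SFinite ν]
    {k : G → G → ℝ≥0∞} (hk : Measurable fun p : G × G => k p.1 p.2)
    (hμ : ∀ x, μ.map (· + x) = μ.withDensity (k x)) :
    μ ∗ ν = μ.withDensity fun y => ∫⁻ x, k x y ∂ν := by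
  ext s hs
  have hadd : Measurable fun q : G × G => q.1 + q.2 := measurable_add
  calc (μ ∗ ν) s
      = ∫⁻ x, μ ((· + x) ⁻¹' s) ∂ν := by
        rw [Measure.conv, Measure.map_apply hadd hs, Measure.prod_apply_symm (hadd hs)]
        rfl
    _ = ∫⁻ x, ∫⁻ y in s, k x y ∂μ ∂ν := by
        simp_rw [← Measure.map_apply (measurable_add_const _) hs, hμ, withDensity_apply _ hs]
    _ = (μ.withDensity fun y => ∫⁻ x, k x y ∂ν) s := by
        rw [withDensity_apply _ hs]
        exact lintegral_lintegral_swap hk.aemeasurable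

end MeasureTheory

theorem gaussianReal_one_eq_withDensity_exp (c : ℝ) :
    gaussianReal c 1
      = (gaussianReal 0 1).withDensity fun y => .ofReal (Real.exp (c * y - c ^ 2 / 2)) := by
  rw [gaussianReal_of_var_ne_zero _ one_ne_zero, gaussianReal_of_var_ne_zero _ one_ne_zero,
    ← withDensity_mul _ (measurable_gaussianPDF 0 1) (by fun_prop)]
  congr 1 with y
  rw [Pi.mul_apply, gaussianPDF, gaussianPDF, ← ENNReal.ofReal_mul (gaussianPDFReal_nonneg _ _ _)]
  simp only [gaussianPDFReal, NNReal.coe_one, mul_one, sub_zero, mul_assoc, ← Real.exp_add]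
  ring_nf

instance (m : ℕ) : IsProbabilityMeasure (stdGaussian m) := by
  unfold _root_.stdGaussian; infer_instance

noncomputable def gaussianShiftDensity {m : ℕ} (x y : Fin m → ℝ) : ℝ≥0∞ :=
  .ofReal (Real.exp (∑ i, (x i * y i - x i ^ 2 / 2)))

theorem measurable_gaussianShiftDensity {m : ℕ} :
    Measurable fun p : (Fin m → ℝ) × (Fin m → ℝ) => gaussianShiftDensity p.1 p.2 := by
  unfold gaussianShiftDensity; fun_prop

theorem stdGaussian_map_add_const {m : ℕ} (x : Fin m → ℝ) :
    (stdGaussian m).map (· + x) = (stdGaussian m).withDensity (gaussianShiftDensity x) := by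
  have hshift : ∀ i, (gaussianReal 0 1).map (· + x i) = gaussianReal (x i) 1 := fun i => by
    rw [gaussianReal_map_add_const, zero_add]
  have : ∀ i, SigmaFinite ((gaussianReal 0 1).map (· + x i)) := fun i => by
    rw [hshift]; infer_instance
  have : ∀ i, SigmaFinite ((gaussianReal 0 1).withDensity
      fun y => .ofReal (Real.exp (x i * y - x i ^ 2 / 2))) := fun i => by
    rw [← gaussianReal_one_eq_withDensity_exp]; infer_instance
  calc (stdGaussian m).map (· + x)
      = Measure.pi fun i => gaussianReal (x i) 1 := by
        simp_rw [_root_.stdGaussian, ← hshift]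
        exact Measure.pi_map_pi fun i => (measurable_add_const (x i)).aemeasurable
    _ = Measure.pi fun i =>
          (gaussianReal 0 1).withDensity fun y => .ofReal (Real.exp (x i * y - x i ^ 2 / 2)) :=
        congr_arg _ (funext fun i => gaussianReal_one_eq_withDensity_exp (x i))
    _ = (stdGaussian m).withDensity (gaussianShiftDensity x) := by
        rw [Measure.pi_withDensity (by fun_prop)]
        congr with y
        rw [gaussianShiftDensity, Real.exp_sum,
          ENNReal.ofReal_prod_of_nonneg fun i _ => (Real.exp_pos _).le]

theorem lintegral_gaussianShiftDensity {m : ℕ} (x : Fin m → ℝ) :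
    ∫⁻ y, gaussianShiftDensity x y ∂stdGaussian m = 1 := by
  rw [← setLIntegral_univ, ← withDensity_apply _ .univ, ← stdGaussian_map_add_const,
    Measure.map_apply (measurable_add_const x) .univ, Set.preimage_univ, measure_univ]

theorem gaussianShiftDensity_mul {m : ℕ} (x x' y : Fin m → ℝ) :
    gaussianShiftDensity x y * gaussianShiftDensity x' y
      = .ofReal (Real.exp (∑ i, x i * x' i)) * gaussianShiftDensity (x + x') y := by
  simp only [gaussianShiftDensity, ← ENNReal.ofReal_mul (Real.exp_pos _).le, ← Real.exp_add,
    ← Finset.sum_add_distrib, Pi.add_apply]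
  congr 3 with i
  ring

/-- The χ²-divergence from the Gaussian location mixture `N(0,I_m) * P` (the law of `G + X`
with `G ∼ N(0,I_m)`, `X ∼ P` independent) to the standard Gaussian `N(0,I_m)` equals
`E[exp⟨X, X'⟩] − 1`, where `X, X'` are i.i.d. with law `P`. -/
theorem stmt3 {m : ℕ} (P : Measure (Fin m → ℝ)) [IsProbabilityMeasure P] :
    chiSqDiv (((stdGaussian m).prod P).map (fun q => q.1 + q.2)) (stdGaussian m)
      = (∫⁻ q, ENNReal.ofReal (Real.exp (∑ i, q.1 i * q.2 i)) ∂(P.prod P)) - 1 := by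
  set g := fun y => ∫⁻ x, gaussianShiftDensity x y ∂P
  have hg : Measurable g := measurable_gaussianShiftDensity.lintegral_prod_left'
  have hmix : stdGaussian m ∗ P = (stdGaussian m).withDensity g :=
    Measure.conv_eq_withDensity_lintegral measurable_gaussianShiftDensity stdGaussian_map_add_const
  change chiSqDiv (stdGaussian m ∗ P) _ = _
  rw [chiSqDiv, hmix,
    lintegral_congr_ae ((Measure.rnDeriv_withDensity _ hg).mono fun y hy => by rw [hy])]
  congr 1
  calc ∫⁻ y, g y ^ 2 ∂stdGaussian m
      = ∫⁻ y, ∫⁻ q, gaussianShiftDensity q.1 y * gaussianShiftDensity q.2 y ∂P.prod P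
          ∂stdGaussian m := by
        refine lintegral_congr fun y => ?_
        have hy : AEMeasurable (gaussianShiftDensity · y) P := by
          unfold gaussianShiftDensity; fun_prop
        rw [sq, ← lintegral_prod_mul hy hy]
    _ = ∫⁻ q, ∫⁻ y, gaussianShiftDensity q.1 y * gaussianShiftDensity q.2 y ∂stdGaussian m
          ∂P.prod P :=
        lintegral_lintegral_swap (by unfold gaussianShiftDensity; fun_prop)
    _ = ∫⁻ q, ENNReal.ofReal (Real.exp (∑ i, q.1 i * q.2 i)) ∂P.prod P := by
        simp_rw [gaussianShiftDensity_mul]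
        refine lintegral_congr fun q => ?_
        rw [lintegral_const_mul _ (by unfold gaussianShiftDensity; fun_prop),
          lintegral_gaussianShiftDensity, mul_one]
end

section
/- Let N be a positive integer, T > 0 and B ≥ 0, and let x₁, …, x_N be nonnegative reals with Σ_{i=1}^N x_i² ≤ B and x_i ≤ T for all i. Then (1/N)·Σ_{i=1}^N exp(x_i) ≤ 1 + √(B/N) + (B/N)·exp(T)/T². -/
open Finset Nat

namespace Real

theorem hasSum_pow_add_two_div_factorial (y : ℝ) :
    HasSum (fun n : ℕ => y ^ (n + 2) / (n + 2)!) (exp y - 1 - y) := by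
  have h := (hasSum_nat_add_iff' 2).mpr (NormedSpace.expSeries_div_hasSum_exp y)
  rw [← exp_eq_exp_ℝ] at h
  simpa [sum_range_succ, sub_sub] using h

/-- `(exp x - 1 - x) / x²` is monotone on `[0, ∞)`, stated without division. -/
theorem sq_mul_exp_sub_one_sub_le {x T : ℝ} (hx : 0 ≤ x) (hxT : x ≤ T) :
    T ^ 2 * (exp x - 1 - x) ≤ x ^ 2 * (exp T - 1 - T) := by
  refine hasSum_le (fun n => ?_) ((hasSum_pow_add_two_div_factorial x).mul_left _)
    ((hasSum_pow_add_two_div_factorial T).mul_left _)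
  calc T ^ 2 * (x ^ (n + 2) / (n + 2)!) = T ^ 2 * x ^ 2 * x ^ n / (n + 2)! := by ring
    _ ≤ T ^ 2 * x ^ 2 * T ^ n / (n + 2)! := by gcongr
    _ = x ^ 2 * (T ^ (n + 2) / (n + 2)!) := by ring

theorem exp_le_one_add_add_sq_mul_exp_div_sq {x T : ℝ} (hT : 0 < T) (hx : 0 ≤ x)
    (hxT : x ≤ T) : exp x ≤ 1 + x + x ^ 2 * exp T / T ^ 2 := by
  have hx2T : x ^ 2 * (exp T - 1 - T) ≤ x ^ 2 * exp T := by
    gcongr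
    linarith
  have h : exp x - 1 - x ≤ x ^ 2 * exp T / T ^ 2 := by
    rw [le_div_iff₀ (by positivity), mul_comm]
    exact (sq_mul_exp_sub_one_sub_le hx hxT).trans hx2T
  linarith

end Real

theorem stmt7_general (N : ℕ) (hN : 0 < N) (T B : ℝ) (hT : 0 < T)
    (x : Fin N → ℝ) (hx : ∀ i, 0 ≤ x i) (hsum : ∑ i, (x i) ^ 2 ≤ B)
    (hxT : ∀ i, x i ≤ T) :
    (1 / N : ℝ) * ∑ i, Real.exp (x i)
      ≤ 1 + Real.sqrt (B / N) + (B / N) * Real.exp T / T ^ 2 := by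
  have hmean : (∑ i, x i) / N ≤ Real.sqrt (B / N) := by
    have hjensen := sum_div_card_sq_le_sum_sq_div_card (s := univ) (f := x)
    rw [Finset.card_univ, Fintype.card_fin] at hjensen
    exact Real.le_sqrt_of_sq_le (hjensen.trans (by gcongr))
  calc (1 / N : ℝ) * ∑ i, Real.exp (x i)
      ≤ (1 / N : ℝ) * ∑ i, (1 + x i + x i ^ 2 * Real.exp T / T ^ 2) := by
        gcongr with i
        exact Real.exp_le_one_add_add_sq_mul_exp_div_sq hT (hx i) (hxT i)
    _ = 1 + (∑ i, x i) / N + (∑ i, x i ^ 2) / N * Real.exp T / T ^ 2 := by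
        rw [sum_add_distrib, sum_add_distrib, ← sum_div, ← sum_mul]
        field_simp
        simp [mul_comm]
    _ ≤ 1 + Real.sqrt (B / N) + (B / N) * Real.exp T / T ^ 2 := by
        gcongr

/-- Averaged exponential bound: if `x₁, …, x_N ≥ 0` satisfy `∑ xᵢ² ≤ B` and `xᵢ ≤ T`, then
`(1/N) ∑ exp(xᵢ) ≤ 1 + √(B/N) + (B/N) exp(T)/T²`. -/
theorem stmt7 (N : ℕ) (hN : 0 < N) (T B : ℝ) (hT : 0 < T) (hB : 0 ≤ B)
    (x : Fin N → ℝ) (hx : ∀ i, 0 ≤ x i) (hsum : ∑ i, (x i) ^ 2 ≤ B)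
    (hxT : ∀ i, x i ≤ T) :
    (1 / N : ℝ) * ∑ i, Real.exp (x i)
      ≤ 1 + Real.sqrt (B / N) + (B / N) * Real.exp T / T ^ 2 :=
  stmt7_general N hN T B hT x hx hsum hxT
end
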